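/- arXiv:1609.02479 — 2 statements merged into one kernel-verified Lean document; each statement's English description precedes it below -/
import Mathlib

section
/- The number of isomorphism classes of interval graphs on n vertices is at most (2n-1)!!. -/
open Nat

/-!
Sort the vertices by the right endpoints of their intervals, move the right endpoint of the
`k`-th vertex to `k`, and its left endpoint to the number of intervals lying entirely to the left
of it. Since right endpoints are sorted, the intervals to the left of the `k`-th one are an initial
segment of the vertices, so this preserves which pairs of intervals meet. Hence every interval
graph is isomorphic to the graph of intervals `[t k, k]` for some integers `t k ≤ k`; there are
`n!` such tuples, and `n! ≤ (2n-1)!!`.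
-/

/-- A graph on `Fin n` is an interval graph if vertices can be assigned closed real
intervals so that distinct vertices are adjacent iff their intervals intersect. -/
def IsIntervalGraph {n : ℕ} (G : SimpleGraph (Fin n)) : Prop :=
  ∃ a b : Fin n → ℝ, (∀ v, a v ≤ b v) ∧
    ∀ u v : Fin n, u ≠ v →
      (G.Adj u v ↔ (Set.Icc (a u) (b u) ∩ Set.Icc (a v) (b v)).Nonempty)

/-- The number of isomorphism classes of interval graphs on `n` vertices. -/
noncomputable def intervalGraphCount (n : ℕ) : ℕ :=
  Nat.card (Quot (fun G H : {G : SimpleGraph (Fin n) // IsIntervalGraph G} =>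
    Nonempty (G.1 ≃g H.1)))

open Finset

theorem Set.Icc_inter_Icc_nonempty_iff {α : Type*} [Lattice α] {a₁ b₁ a₂ b₂ : α}
    (h₁ : a₁ ≤ b₁) (h₂ : a₂ ≤ b₂) :
    (Set.Icc a₁ b₁ ∩ Set.Icc a₂ b₂).Nonempty ↔ a₁ ≤ b₂ ∧ a₂ ≤ b₁ := by
  simp only [Set.Icc_inter_Icc, Set.nonempty_Icc, sup_le_iff, le_inf_iff]
  tauto

theorem Fin.lt_card_filter_iff_of_antitone {n : ℕ} {P : Fin n → Prop} [DecidablePred P]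
    (hP : Antitone P) (u : Fin n) : (u : ℕ) < #{w | P w} ↔ P u := by
  constructor
  · intro hu
    by_contra hPu
    have : univ.filter P ⊆ Iio u := fun w hw ↦
      mem_Iio.2 (lt_of_not_ge fun huw ↦ hPu (hP huw (mem_filter.1 hw).2))
    simpa using hu.trans_le (card_le_card this)
  · intro hPu
    have : Iic u ⊆ univ.filter P := fun w hw ↦
      mem_filter.2 ⟨mem_univ w, hP (mem_Iic.1 hw) hPu⟩
    simpa using card_le_card this

theorem Nat.factorial_le_doubleFactorial_two_mul_sub_one : ∀ n : ℕ, n ! ≤ (2 * n - 1)‼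
  | 0 => le_rfl
  | n + 1 => by
    rw [factorial_succ, show 2 * (n + 1) - 1 = 2 * n + 1 by omega, doubleFactorial_add_one]
    exact Nat.mul_le_mul (by omega) (factorial_le_doubleFactorial_two_mul_sub_one n)

namespace IntervalGraph

variable {n : ℕ}

/-- The interval graph of the intervals `[t v, v]`. -/
def ofLeftEnds (t : ∀ v : Fin n, Fin (v + 1)) : SimpleGraph (Fin n) where
  Adj u v := u ≠ v ∧ (t u : ℕ) ≤ v ∧ (t v : ℕ) ≤ u
  symm := ⟨fun _ _ h ↦ ⟨h.1.symm, h.2.2, h.2.1⟩⟩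
  loopless := ⟨fun _ h ↦ h.1 rfl⟩

theorem isIntervalGraph_ofLeftEnds (t : ∀ v : Fin n, Fin (v + 1)) :
    IsIntervalGraph (ofLeftEnds t) := by
  have hle (v : Fin n) : ((t v : ℕ) : ℝ) ≤ (v : ℕ) := Nat.cast_le.2 (t v).is_le
  refine ⟨fun v ↦ (t v : ℕ), fun v ↦ (v : ℕ), hle, fun u v huv ↦ ?_⟩
  rw [Set.Icc_inter_Icc_nonempty_iff (hle u) (hle v), Nat.cast_le, Nat.cast_le]
  exact and_iff_right huv

theorem exists_iso_ofLeftEnds {G : SimpleGraph (Fin n)} (hG : IsIntervalGraph G) :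
    ∃ t : ∀ v : Fin n, Fin (v + 1), Nonempty (ofLeftEnds t ≃g G) := by
  obtain ⟨a, b, hab, hadj⟩ := hG
  let σ := Tuple.sort b
  have hleft (v : Fin n) : Antitone fun w ↦ b (σ w) < a (σ v) :=
    fun _ _ hw h ↦ (Tuple.monotone_sort b hw).trans_lt h
  let t (v : Fin n) : Fin (v + 1) :=
    ⟨#{w | b (σ w) < a (σ v)}, Nat.lt_succ_of_le <| not_lt.1 fun h ↦
      (hab (σ v)).not_gt ((Fin.lt_card_filter_iff_of_antitone (hleft v) v).1 h)⟩
  have ht (u v : Fin n) : (t v : ℕ) ≤ u ↔ a (σ v) ≤ b (σ u) := by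
    rw [← not_lt, ← not_lt]
    exact not_congr (Fin.lt_card_filter_iff_of_antitone (hleft v) u)
  refine ⟨t, ⟨σ, fun {u v} ↦ ?_⟩⟩
  by_cases huv : u = v
  · subst huv
    exact iff_of_false G.irrefl (ofLeftEnds t).irrefl
  change _ ↔ u ≠ v ∧ _ ∧ _
  rw [hadj _ _ (σ.injective.ne huv), Set.Icc_inter_Icc_nonempty_iff (hab _) (hab _), ht, ht]
  exact (and_iff_right huv).symm

theorem card_leftEnds (n : ℕ) : Nat.card (∀ v : Fin n, Fin (v + 1)) = n ! := by
  simp only [Nat.card_eq_fintype_card, Fintype.card_pi, Fintype.card_fin]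
  rw [Fin.prod_univ_eq_prod_range (· + 1), prod_range_add_one_eq_factorial]

end IntervalGraph

theorem intervalGraphCount_le (n : ℕ) :
    intervalGraphCount n ≤ (2 * n - 1)‼ := by
  calc intervalGraphCount n ≤ Nat.card (∀ v : Fin n, Fin (v + 1)) := by
        refine Nat.card_le_card_of_surjective (fun t ↦
          Quot.mk _ ⟨IntervalGraph.ofLeftEnds t, IntervalGraph.isIntervalGraph_ofLeftEnds t⟩) ?_
        rintro ⟨G, hG⟩
        obtain ⟨t, ⟨e⟩⟩ := IntervalGraph.exists_iso_ofLeftEnds hG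
        exact ⟨t, Quot.sound ⟨e⟩⟩
    _ = n ! := IntervalGraph.card_leftEnds n
    _ ≤ (2 * n - 1)‼ := factorial_le_doubleFactorial_two_mul_sub_one n
end

section
/- The map sending a permutation π of {1,...,k} to the vertex-3-colored intersection graph G_π of the intervals R_j = [3j-1,3j] (red), B_j = [3k+3j-2,3k+3j-1] (blue), W_j = [3j-2, 3k+3π(j)] (white) is injective: if G_π and G_σ are isomorphic as colored graphs, then π = σ. -/
/-- The intervals associated to a permutation `π` of `{1,…,k}`: red `R_j = [3j-1,3j]`,
blue `B_j = [3k+3j-2,3k+3j-1]`, white `W_j = [3j-2, 3k+3π(j)]` (indices `0`-based here). -/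
noncomputable def permIvl (k : ℕ) (π : Equiv.Perm (Fin k)) :
    (Fin k ⊕ Fin k ⊕ Fin k) → Set ℝ :=
  Sum.elim (fun j => Set.Icc (3*(j:ℝ)+2) (3*(j:ℝ)+3))
    (Sum.elim (fun j => Set.Icc (3*(k:ℝ)+3*(j:ℝ)+1) (3*(k:ℝ)+3*(j:ℝ)+2))
      (fun j => Set.Icc (3*(j:ℝ)+1) (3*(k:ℝ)+3*((π j : ℕ):ℝ)+3)))

/-- The intersection graph `G_π` of the intervals of `permIvl`. -/
noncomputable def permGraph (k : ℕ) (π : Equiv.Perm (Fin k)) :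
    SimpleGraph (Fin k ⊕ Fin k ⊕ Fin k) where
  Adj u v := u ≠ v ∧ (permIvl k π u ∩ permIvl k π v).Nonempty
  symm := by
    constructor
    intro u v h
    obtain ⟨h1, h2⟩ := h
    exact ⟨h1.symm, by rwa [Set.inter_comm]⟩
  loopless := by constructor; intro v h; exact h.1 rfl

/-- The 3-coloring: red, blue, white. -/
def permColor (k : ℕ) : (Fin k ⊕ Fin k ⊕ Fin k) → Fin 3 :=
  Sum.elim (fun _ => 0) (Sum.elim (fun _ => 1) (fun _ => 2))

/-!
A colour-preserving isomorphism preserves, for every vertex, the number of its neighbours of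
each colour. The white vertex `W_j` meets exactly the red intervals `R_i` with `j ≤ i` and the
blue intervals `B_i` with `i ≤ π j`, so it has `k - j` red and `π j + 1` blue neighbours. An
isomorphism `G_π ≃ G_σ` sends `W_j` to some white `W_j'`; the red counts give `j' = j`, and then
the blue counts give `π j = σ j`.
-/

open Set

theorem SimpleGraph.Iso.ncard_neighborSet_inter_preimage {V W α : Type*}
    {G : SimpleGraph V} {H : SimpleGraph W} (e : G ≃g H) {cG : V → α} {cH : W → α}
    (hc : ∀ v, cH (e v) = cG v) (v : V) (s : Set α) :
    (H.neighborSet (e v) ∩ cH ⁻¹' s).ncard = (G.neighborSet v ∩ cG ⁻¹' s).ncard := by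
  have : G.neighborSet v ∩ cG ⁻¹' s = e ⁻¹' (H.neighborSet (e v) ∩ cH ⁻¹' s) := by
    ext u; simp [hc, e.map_adj_iff]
  rw [this, ncard_preimage_of_injective_subset_range e.injective (by simp)]

section
variable (k : ℕ) (π : Equiv.Perm (Fin k)) (j i : Fin k)

theorem permGraph_adj_white_red :
    (permGraph k π).Adj (.inr (.inr j)) (.inl i) ↔ j ≤ i := by
  have := (π j).isLt
  simp only [permGraph, permIvl, Sum.elim_inl, Sum.elim_inr, Icc_inter_Icc, nonempty_Icc,
    sup_le_iff, le_inf_iff, ne_eq, reduceCtorEq, not_false_eq_true, true_and, Fin.le_def]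
  norm_cast
  omega

theorem permGraph_adj_white_blue :
    (permGraph k π).Adj (.inr (.inr j)) (.inr (.inl i)) ↔ i ≤ π j := by
  have := j.isLt
  simp only [permGraph, permIvl, Sum.elim_inl, Sum.elim_inr, Icc_inter_Icc, nonempty_Icc,
    sup_le_iff, le_inf_iff, ne_eq, Sum.inr.injEq, reduceCtorEq, not_false_eq_true, true_and,
    Fin.le_def]
  norm_cast
  omega

theorem permGraph_neighborSet_white_inter_red :
    (permGraph k π).neighborSet (.inr (.inr j)) ∩ permColor k ⁻¹' {0} = Sum.inl '' Ici j := by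
  ext (v | v | v) <;> simp [permColor, permGraph_adj_white_red]

theorem permGraph_neighborSet_white_inter_blue :
    (permGraph k π).neighborSet (.inr (.inr j)) ∩ permColor k ⁻¹' {1} =
      (Sum.inr ∘ Sum.inl) '' Iic (π j) := by
  ext (v | v | v) <;> simp [permColor, permGraph_adj_white_blue]

theorem permGraph_ncard_neighborSet_white_inter_red :
    ((permGraph k π).neighborSet (.inr (.inr j)) ∩ permColor k ⁻¹' {0}).ncard = k - j := by
  rw [permGraph_neighborSet_white_inter_red, ncard_image_of_injective _ Sum.inl_injective,
    ← Finset.coe_Ici, ncard_coe_finset, Fin.card_Ici]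

theorem permGraph_ncard_neighborSet_white_inter_blue :
    ((permGraph k π).neighborSet (.inr (.inr j)) ∩ permColor k ⁻¹' {1}).ncard = π j + 1 := by
  rw [permGraph_neighborSet_white_inter_blue,
    ncard_image_of_injective _ (Sum.inr_injective.comp Sum.inl_injective),
    ← Finset.coe_Iic, ncard_coe_finset, Fin.card_Iic]

end

theorem permColor_eq_two_iff {k : ℕ} {v : Fin k ⊕ Fin k ⊕ Fin k} :
    permColor k v = 2 ↔ ∃ j, v = .inr (.inr j) := by
  rcases v with _ | _ | j <;> simp [permColor]

/-- The map `π ↦ G_π` is injective up to colored isomorphism. -/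
theorem permGraph_injective (k : ℕ) (π σ : Equiv.Perm (Fin k))
    (h : ∃ e : permGraph k π ≃g permGraph k σ, ∀ v, permColor k (e v) = permColor k v) :
    π = σ := by
  obtain ⟨e, hc⟩ := h
  ext j
  obtain ⟨j', hj'⟩ :=
    permColor_eq_two_iff.mp ((hc _).trans (permColor_eq_two_iff.mpr ⟨j, rfl⟩))
  have hred := e.ncard_neighborSet_inter_preimage hc (.inr (.inr j)) {0}
  have hblue := e.ncard_neighborSet_inter_preimage hc (.inr (.inr j)) {1}
  rw [hj', permGraph_ncard_neighborSet_white_inter_red,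
    permGraph_ncard_neighborSet_white_inter_red] at hred
  rw [hj', permGraph_ncard_neighborSet_white_inter_blue,
    permGraph_ncard_neighborSet_white_inter_blue] at hblue
  obtain rfl : j' = j := by omega
  omega
end
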